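/- arXiv:1904.10386 — 4 statements merged into one kernel-verified Lean document; each statement's English description precedes it below -/
import Mathlib

section
/- The strong mitigation relation well-orders every finite set of severity intervals: for every nonempty finite set A of pairs of real numbers, there exists a pair x ∈ A such that x ⊑ y for all y ∈ A, where ⊑ is the relation on ℝ × ℝ defined by (a,b) ⊑ (c,d) iff (c ≤ a ∧ d ≤ b) ∨ (a < c ∧ d < b). -/
/-! An interval with the largest right endpoint, and among those the largest left endpoint,
is below every other one: a rival with a smaller right endpoint either also has a smaller left
endpoint or lies strictly inside it. So the greatest element for the lexicographic order on
`(b, a)` is a least element for `⊑`. -/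

/-- The strong mitigation relation on severity intervals `[a, b)`, represented
as pairs of reals: `(a,b) ⊑ (c,d)` iff `(c ≤ a ∧ d ≤ b) ∨ (a < c ∧ d < b)`. -/
def SMOrd (x y : ℝ × ℝ) : Prop :=
  (y.1 ≤ x.1 ∧ y.2 ≤ x.2) ∨ (x.1 < y.1 ∧ y.2 < x.2)

theorem smOrd_of_toLex_swap_le {x y : ℝ × ℝ} (h : toLex y.swap ≤ toLex x.swap) : SMOrd x y := by
  rcases Prod.Lex.le_iff.mp h with hlt | ⟨heq, hle⟩
  · rcases le_or_gt y.1 x.1 with h1 | h1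
    · exact Or.inl ⟨h1, hlt.le⟩
    · exact Or.inr ⟨h1, hlt⟩
  · exact Or.inl ⟨hle, heq.le⟩

/-- Every nonempty finite set of severity intervals has a least element w.r.t.
the strong mitigation relation. -/
theorem smord_wellorder (A : Set (ℝ × ℝ)) (hfin : A.Finite) (hne : A.Nonempty) :
    ∃ x ∈ A, ∀ y ∈ A, SMOrd x y := by
  obtain ⟨x, hxA, hmax⟩ := A.exists_max_image (fun p => toLex p.swap) hfin hne
  exact ⟨x, hxA, fun y hy => smOrd_of_toLex_swap_le (hmax y hy)⟩
end

section
/- The strong mitigation order extends the partially comparable inclusive mitigation order: suppose for each risk factor i the active phase act i is the least element of ⪯ᵢ, each factor i carries a severity interval (l i, u i) with l i ≤ u i, the index type ι is finite, and σ, σ' are risk states such that σ ≾ₘ σ' and the active set A' = {i | σ' i = act i} is nonempty (hence A = {i | σ i = act i} is nonempty). Let S(σ) = (min over A of l, max over A of u) and S(σ') = (min over A' of l, max over A' of u) be the convex-hull severity intervals. Then σ ≤ₘ σ' holds, i.e., either S(σ') is below S(σ) componentwise (min over A' of l ≤ min over A of l and max over A' of u ≤ max over A of u) or S(σ') is properly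 included in S(σ) (min over A of l ≤ min over A' of l, max over A' of u ≤ max over A of u, and S(σ') ≠ S(σ)). -/
/-- Partially comparable inclusive mitigation order. -/
def PartMit {ι : Type*} {Phase : ι → Type*} [∀ i, PartialOrder (Phase i)]
    (σ σ' : ∀ i, Phase i) : Prop :=
  ∀ i, σ i ≤ σ' i ∨ (¬ σ i ≤ σ' i ∧ ¬ σ' i ≤ σ i)

/-- Lower bound of the convex-hull severity interval of a set of factors. -/
noncomputable def SLo {ι : Type*} (l : ι → ℝ) (A : Set ι) : ℝ := sInf (l '' A)

/-- Upper bound of the convex-hull severity interval of a set of factors. -/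
noncomputable def SHi {ι : Type*} (u : ι → ℝ) (A : Set ι) : ℝ := sSup (u '' A)

/-! Because `act i` is least, a factor active in `σ'` is comparable with its phase in `σ` and hence
active in `σ` too. So `A' ⊆ A`, the hull of `A'` lies inside the hull of `A`, and the two
alternatives of the conclusion are separated by whether the hulls coincide. -/

theorem PartMit.active_subset {ι : Type*} {Phase : ι → Type*} [∀ i, PartialOrder (Phase i)]
    {act : ∀ i, Phase i} (hact : ∀ i (p : Phase i), act i ≤ p) {σ σ' : ∀ i, Phase i}
    (h : PartMit σ σ') : {i | σ' i = act i} ⊆ {i | σ i = act i} := by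
  intro i (hi : σ' i = act i)
  rcases h i with hle | ⟨-, hnot⟩
  · exact le_antisymm (hle.trans_eq hi) (hact i (σ i))
  · exact absurd (hi ▸ hact i (σ i)) hnot

theorem SLo_le_SLo {ι : Type*} {l : ι → ℝ} {A B : Set ι} (hB : BddBelow (l '' B))
    (hA : A.Nonempty) (hAB : A ⊆ B) : SLo l B ≤ SLo l A :=
  csInf_le_csInf hB (hA.image l) (Set.image_mono hAB)

theorem SHi_le_SHi {ι : Type*} {u : ι → ℝ} {A B : Set ι} (hB : BddAbove (u '' B))
    (hA : A.Nonempty) (hAB : A ⊆ B) : SHi u A ≤ SHi u B :=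
  csSup_le_csSup hB (hA.image u) (Set.image_mono hAB)

theorem strong_extends_partial_general {ι : Type*} {Phase : ι → Type*}
    [∀ i, PartialOrder (Phase i)] [Finite ι]
    (act : ∀ i, Phase i) (hact : ∀ i (p : Phase i), act i ≤ p)
    (l u : ι → ℝ)
    (σ σ' : ∀ i, Phase i)
    (h : PartMit σ σ')
    (hA' : {i | σ' i = act i}.Nonempty) :
    (SLo l {i | σ' i = act i} ≤ SLo l {i | σ i = act i} ∧
      SHi u {i | σ' i = act i} ≤ SHi u {i | σ i = act i}) ∨
    (SLo l {i | σ i = act i} ≤ SLo l {i | σ' i = act i} ∧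
      SHi u {i | σ' i = act i} ≤ SHi u {i | σ i = act i} ∧
      (SLo l {i | σ' i = act i}, SHi u {i | σ' i = act i}) ≠
        (SLo l {i | σ i = act i}, SHi u {i | σ i = act i})) := by
  have hsub := PartMit.active_subset hact h
  have hlo := SLo_le_SLo ((Set.toFinite _).image l).bddBelow hA' hsub
  have hhi := SHi_le_SHi ((Set.toFinite _).image u).bddAbove hA' hsub
  by_cases heq : (SLo l {i | σ' i = act i}, SHi u {i | σ' i = act i}) =
      (SLo l {i | σ i = act i}, SHi u {i | σ i = act i})
  · exact Or.inl ⟨(congrArg Prod.fst heq).le, hhi⟩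
  · exact Or.inr ⟨hlo, hhi, heq⟩

/-- The strong mitigation order extends the partially comparable inclusive
mitigation order: if σ ≾ₘ σ' and σ' has a nonempty active set, then the
accumulated severity interval of σ' is componentwise below that of σ or is
properly included in it. -/
theorem strong_extends_partial {ι : Type*} {Phase : ι → Type*}
    [∀ i, PartialOrder (Phase i)] [Finite ι]
    (act : ∀ i, Phase i) (hact : ∀ i (p : Phase i), act i ≤ p)
    (l u : ι → ℝ) (hlu : ∀ i, l i ≤ u i)
    (σ σ' : ∀ i, Phase i)
    (h : PartMit σ σ')
    (hA' : {i | σ' i = act i}.Nonempty) :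
    (SLo l {i | σ' i = act i} ≤ SLo l {i | σ i = act i} ∧
      SHi u {i | σ' i = act i} ≤ SHi u {i | σ i = act i}) ∨
    (SLo l {i | σ i = act i} ≤ SLo l {i | σ' i = act i} ∧
      SHi u {i | σ' i = act i} ≤ SHi u {i | σ i = act i} ∧
      (SLo l {i | σ' i = act i}, SHi u {i | σ' i = act i}) ≠
        (SLo l {i | σ i = act i}, SHi u {i | σ i = act i})) :=
  strong_extends_partial_general act hact l u σ σ' h hA'
end

section
/- The strong mitigation order extends the partially comparable inclusive mitigation order, which in turn extends the fully comparable inclusive mitigation order: under the assumptions that for each factor i the active phase act i is the least element of ⪯ᵢ, each factor carries a severity interval (l i, u i) with l i ≤ u i, ι is finite, and the active set of σ' is nonempty, the chain of implications σ ⪯ₘ σ' ⟹ σ ≾ₘ σ' ⟹ σ ≤ₘ σ' holds, where σ ≤ₘ σ' means that either S(σ') is below S(σ) componentwise or S(σ') is properly included in S(σ). -/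
/-- Fully comparable inclusive mitigation order. -/
def FullMit {ι : Type*} {Phase : ι → Type*} [∀ i, PartialOrder (Phase i)]
    (σ σ' : ∀ i, Phase i) : Prop :=
  ∀ i, σ i ≤ σ' i

/-!
When `act i` is least, a factor active in `σ'` satisfies `σ' i ≤ σ i`, which under `≾ₘ` excludes
incomparability, so it is active in `σ` too. Hence the active set shrinks, the severity interval
`S(σ')` is contained in `S(σ)`, and the two cases of `≤ₘ` are whether the lower ends coincide.
-/

theorem FullMit.partMit {ι : Type*} {Phase : ι → Type*} [∀ i, PartialOrder (Phase i)]
    {σ σ' : ∀ i, Phase i} (h : FullMit σ σ') : PartMit σ σ' :=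
  fun i => Or.inl (h i)

namespace PartMit

variable {ι : Type*} {Phase : ι → Type*} [∀ i, PartialOrder (Phase i)] {σ σ' : ∀ i, Phase i}

theorem le_of_ge (h : PartMit σ σ') {i : ι} (hge : σ' i ≤ σ i) : σ i ≤ σ' i :=
  (h i).resolve_right fun hinc => hinc.2 hge

theorem active_subset_s13 (h : PartMit σ σ') {act : ∀ i, Phase i}
    (hact : ∀ i (p : Phase i), act i ≤ p) :
    {i | σ' i = act i} ⊆ {i | σ i = act i} := by
  intro i (hi : σ' i = act i)
  have hge : σ' i ≤ σ i := hi ▸ hact i (σ i)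
  exact le_antisymm (hi ▸ h.le_of_ge hge) (hact i (σ i))

end PartMit

theorem SLo_le_of_subset {ι : Type*} (l : ι → ℝ) {A B : Set ι} (hB : B.Finite) (hA : A.Nonempty)
    (hAB : A ⊆ B) : SLo l B ≤ SLo l A :=
  csInf_le_csInf (hB.image l).bddBelow (hA.image l) (Set.image_mono hAB)

theorem SHi_le_of_subset {ι : Type*} (u : ι → ℝ) {A B : Set ι} (hB : B.Finite) (hA : A.Nonempty)
    (hAB : A ⊆ B) : SHi u A ≤ SHi u B :=
  csSup_le_csSup (hB.image u).bddAbove (hA.image u) (Set.image_mono hAB)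

theorem mitigation_order_chain_general {ι : Type*} {Phase : ι → Type*}
    [∀ i, PartialOrder (Phase i)] [Finite ι]
    (act : ∀ i, Phase i) (hact : ∀ i (p : Phase i), act i ≤ p)
    (l u : ι → ℝ)
    (σ σ' : ∀ i, Phase i)
    (hA' : {i | σ' i = act i}.Nonempty) :
    (FullMit σ σ' → PartMit σ σ') ∧
    (PartMit σ σ' →
      (SLo l {i | σ' i = act i} ≤ SLo l {i | σ i = act i} ∧
        SHi u {i | σ' i = act i} ≤ SHi u {i | σ i = act i}) ∨
      (SLo l {i | σ i = act i} ≤ SLo l {i | σ' i = act i} ∧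
        SHi u {i | σ' i = act i} ≤ SHi u {i | σ i = act i} ∧
        (SLo l {i | σ' i = act i}, SHi u {i | σ' i = act i}) ≠
          (SLo l {i | σ i = act i}, SHi u {i | σ i = act i}))) := by
  refine ⟨FullMit.partMit, fun h => ?_⟩
  have hsub := h.active_subset_s13 hact
  have hlo := SLo_le_of_subset l (Set.toFinite _) hA' hsub
  have hhi := SHi_le_of_subset u (Set.toFinite _) hA' hsub
  by_cases hloEq : SLo l {i | σ' i = act i} = SLo l {i | σ i = act i}
  · exact Or.inl ⟨hloEq.le, hhi⟩
  · exact Or.inr ⟨hlo, hhi, fun hS => hloEq (congrArg Prod.fst hS)⟩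

/-- The strong mitigation order extends the partially comparable inclusive
mitigation order, which extends the fully comparable one:
σ ⪯ₘ σ' ⟹ σ ≾ₘ σ' ⟹ σ ≤ₘ σ'. -/
theorem mitigation_order_chain {ι : Type*} {Phase : ι → Type*}
    [∀ i, PartialOrder (Phase i)] [Finite ι]
    (act : ∀ i, Phase i) (hact : ∀ i (p : Phase i), act i ≤ p)
    (l u : ι → ℝ) (hlu : ∀ i, l i ≤ u i)
    (σ σ' : ∀ i, Phase i)
    (hA' : {i | σ' i = act i}.Nonempty) :
    (FullMit σ σ' → PartMit σ σ') ∧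
    (PartMit σ σ' →
      (SLo l {i | σ' i = act i} ≤ SLo l {i | σ i = act i} ∧
        SHi u {i | σ' i = act i} ≤ SHi u {i | σ i = act i}) ∨
      (SLo l {i | σ i = act i} ≤ SLo l {i | σ' i = act i} ∧
        SHi u {i | σ' i = act i} ≤ SHi u {i | σ i = act i} ∧
        (SLo l {i | σ' i = act i}, SHi u {i | σ' i = act i}) ≠
          (SLo l {i | σ i = act i}, SHi u {i | σ i = act i}))) :=
  mitigation_order_chain_general act hact l u σ σ' hA'
end

section
/- Parallel composition of risk structures is commutative: for any risk structures L1 over scope F1 and L2 over scope F2, the composition L1 ∥ L2 equals L2 ∥ L1, i.e., they have the same state space (R(F1) ⊗ R(F2) = R(F2) ⊗ R(F1)), the same set of initial states, and the same transition relation generated by the composition rules. -/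
/-- The risk space over `F`: all sets of dependent pairs `(i, p)` that are
functional with domain `F`. -/
def RSpace {ι : Type*} (Phase : ι → Type*) (F : Set ι) : Set (Set (Sigma Phase)) :=
  { σ | (∀ i ∈ F, ∃! p : Phase i, Sigma.mk i p ∈ σ) ∧ ∀ x ∈ σ, x.1 ∈ F }

/-- Consistency (compatibility) of risk states: the phases assigned to a common
identifier coincide. -/
def Compatible {ι : Type*} {Phase : ι → Type*} (σ1 σ2 : Set (Sigma Phase)) : Prop :=
  ∀ (i : ι) (p q : Phase i), Sigma.mk i p ∈ σ1 → Sigma.mk i q ∈ σ2 → p = q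

/-- Composition of sets of risk states. -/
def SComp {ι : Type*} {Phase : ι → Type*} (A B : Set (Set (Sigma Phase))) :
    Set (Set (Sigma Phase)) :=
  { σ | ∃ σ1 ∈ A, ∃ σ2 ∈ B, Compatible σ1 σ2 ∧ σ = σ1 ∪ σ2 }

/-- A risk structure over scope `F`: a labelled transition system on the risk
space `R(F)` whose labels are nonempty subsets of the alphabet `Ev`. -/
structure RiskStructure {ι : Type*} (Phase : ι → Type*) (Ev : Type*) (F : Set ι) where
  init : Set (Set (Sigma Phase))
  trans : Set (Set (Sigma Phase) × Set Ev × Set (Sigma Phase))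
  init_wf : init ⊆ RSpace Phase F
  src_wf : ∀ t ∈ trans, t.1 ∈ RSpace Phase F
  tgt_wf : ∀ t ∈ trans, t.2.2 ∈ RSpace Phase F
  lbl_ne : ∀ t ∈ trans, t.2.1 ≠ ∅

/-- The transition relation of the parallel composition of two risk structures,
generated by the five composition rules. -/
inductive ParStep {ι : Type*} {Phase : ι → Type*} {Ev : Type*}
    (T1 T2 : Set (Set (Sigma Phase) × Set Ev × Set (Sigma Phase))) :
    Set (Sigma Phase) → Set Ev → Set (Sigma Phase) → Prop
  | left {σ1 σ1' σ2 : Set (Sigma Phase)} {e : Set Ev} :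
      (σ1, e, σ1') ∈ T1 → (¬ ∃ f σ2', (σ2, f, σ2') ∈ T2) →
      Compatible σ1 σ2 → Compatible σ1' σ2 → e ≠ ∅ →
      ParStep T1 T2 (σ1 ∪ σ2) e (σ1' ∪ σ2)
  | right {σ1 σ2 σ2' : Set (Sigma Phase)} {f : Set Ev} :
      (¬ ∃ e σ1', (σ1, e, σ1') ∈ T1) → (σ2, f, σ2') ∈ T2 →
      Compatible σ1 σ2 → Compatible σ1 σ2' → f ≠ ∅ →
      ParStep T1 T2 (σ1 ∪ σ2) f (σ1 ∪ σ2')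
  | pleft {σ1 σ1' σ2 σ2' : Set (Sigma Phase)} {e f : Set Ev} :
      (σ1, e, σ1') ∈ T1 → (σ2, f, σ2') ∈ T2 →
      Compatible σ1 σ2 → Compatible σ1' σ2 → e \ f ≠ ∅ →
      ParStep T1 T2 (σ1 ∪ σ2) (e \ f) (σ1' ∪ σ2)
  | pright {σ1 σ1' σ2 σ2' : Set (Sigma Phase)} {e f : Set Ev} :
      (σ1, e, σ1') ∈ T1 → (σ2, f, σ2') ∈ T2 →
      Compatible σ1 σ2 → Compatible σ1 σ2' → f \ e ≠ ∅ →
      ParStep T1 T2 (σ1 ∪ σ2) (f \ e) (σ1 ∪ σ2')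
  | both {σ1 σ1' σ2 σ2' : Set (Sigma Phase)} {e f : Set Ev} :
      (σ1, e, σ1') ∈ T1 → (σ2, f, σ2') ∈ T2 →
      Compatible σ1 σ2 → Compatible σ1' σ2' → e ∩ f ≠ ∅ →
      ParStep T1 T2 (σ1 ∪ σ2) (e ∩ f) (σ1' ∪ σ2')

/-! Each composition rule is the mirror image of another one with the two components exchanged
(`left` ↔ `right`, `pleft` ↔ `pright`, `both` ↔ itself), and both compatibility and union of
risk states are symmetric. -/

theorem Compatible.symm {ι : Type*} {Phase : ι → Type*} {σ1 σ2 : Set (Sigma Phase)}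
    (h : Compatible σ1 σ2) : Compatible σ2 σ1 :=
  fun i p q hp hq => (h i q p hq hp).symm

theorem sComp_comm {ι : Type*} {Phase : ι → Type*} (A B : Set (Set (Sigma Phase))) :
    SComp A B = SComp B A := by
  ext σ
  constructor <;> rintro ⟨σ1, h1, σ2, h2, hc, rfl⟩ <;>
    exact ⟨σ2, h2, σ1, h1, hc.symm, Set.union_comm _ _⟩

theorem ParStep.swap {ι : Type*} {Phase : ι → Type*} {Ev : Type*}
    {T1 T2 : Set (Set (Sigma Phase) × Set Ev × Set (Sigma Phase))}
    {s s' : Set (Sigma Phase)} {e : Set Ev}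
    (h : ParStep T1 T2 s e s') : ParStep T2 T1 s e s' := by
  cases h with
  | @left σ1 σ1' σ2 e h1 h2 hc hc' hne =>
      rw [Set.union_comm σ1 σ2, Set.union_comm σ1' σ2]
      exact .right h2 h1 hc.symm hc'.symm hne
  | @right σ1 σ2 σ2' f h1 h2 hc hc' hne =>
      rw [Set.union_comm σ1 σ2, Set.union_comm σ1 σ2']
      exact .left h2 h1 hc.symm hc'.symm hne
  | @pleft σ1 σ1' σ2 σ2' e f h1 h2 hc hc' hne =>
      rw [Set.union_comm σ1 σ2, Set.union_comm σ1' σ2]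
      exact .pright h2 h1 hc.symm hc'.symm hne
  | @pright σ1 σ1' σ2 σ2' e f h1 h2 hc hc' hne =>
      rw [Set.union_comm σ1 σ2, Set.union_comm σ1 σ2']
      exact .pleft h2 h1 hc.symm hc'.symm hne
  | @both σ1 σ1' σ2 σ2' e f h1 h2 hc hc' hne =>
      rw [Set.union_comm σ1 σ2, Set.union_comm σ1' σ2', Set.inter_comm e f] at *
      exact .both h2 h1 hc.symm hc'.symm hne

theorem ParStep.swap_iff {ι : Type*} {Phase : ι → Type*} {Ev : Type*}
    {T1 T2 : Set (Set (Sigma Phase) × Set Ev × Set (Sigma Phase))}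
    {s s' : Set (Sigma Phase)} {e : Set Ev} :
    ParStep T1 T2 s e s' ↔ ParStep T2 T1 s e s' :=
  ⟨ParStep.swap, ParStep.swap⟩

/-- Parallel composition of risk structures is commutative: `L1 ∥ L2` and
`L2 ∥ L1` have the same state space, the same initial states, and the same
transition relation. -/
theorem parStep_comm {ι : Type*} {Phase : ι → Type*} {Ev : Type*}
    (F1 F2 : Set ι)
    (L1 : RiskStructure Phase Ev F1) (L2 : RiskStructure Phase Ev F2) :
    SComp (RSpace Phase F1) (RSpace Phase F2) =
      SComp (RSpace Phase F2) (RSpace Phase F1) ∧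
    SComp L1.init L2.init = SComp L2.init L1.init ∧
    ∀ (s : Set (Sigma Phase)) (e : Set Ev) (s' : Set (Sigma Phase)),
      ParStep L1.trans L2.trans s e s' ↔ ParStep L2.trans L1.trans s e s' :=
  ⟨sComp_comm _ _, sComp_comm _ _, fun _ _ _ => ParStep.swap_iff⟩
end
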